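/- arXiv:2305.15165 — 4 statements merged into one kernel-verified Lean document; each statement's English description precedes it below -/
import Mathlib

section
/- Let 0 ≤ ε ≤ τ be real numbers and define π = (e^ε - 1)/(e^τ - 1). Then π·e^{-τ} + 1 - π ≥ e^{-ε}. -/
theorem sampling_factor_lower_bound (ε τ : ℝ) (hε : 0 ≤ ε) (hετ : ε ≤ τ)
    (π : ℝ) (hπ : π = (Real.exp ε - 1) / (Real.exp τ - 1)) :
    Real.exp (-ε) ≤ π * Real.exp (-τ) + 1 - π := by
  rcases eq_or_lt_of_le (hε.trans hετ) with h0 | h0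
  · have hτ : τ = 0 := h0.symm
    have hε0 : ε = 0 := le_antisymm (hετ.trans_eq hτ) hε
    simp [hπ, hτ, hε0]
  · have hτ1 : 1 < Real.exp τ := by
      rw [show (1:ℝ) = Real.exp 0 by simp]; exact Real.exp_lt_exp.2 h0
    have hd : Real.exp τ - 1 ≠ 0 := by linarith
    have hπ' : π * (Real.exp τ - 1) = Real.exp ε - 1 := by
      rw [hπ]; field_simp
    have hkey : (Real.exp ε - 1) * (Real.exp (τ - ε) - 1) ≥ 0 := by
      apply mul_nonneg
      · have := Real.one_le_exp hε; linarith
      · have := Real.one_le_exp (by linarith : 0 ≤ τ - ε); linarith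
    -- goal equivalent after multiplying by exp τ > 0
    have hexpτ : 0 < Real.exp τ := Real.exp_pos τ
    have h1 : Real.exp (τ - ε) = Real.exp τ * Real.exp (-ε) := by
      rw [← Real.exp_add]; ring_nf
    have h2 : Real.exp (-τ) = (Real.exp τ)⁻¹ := by rw [← Real.exp_neg]
    have hgoal : Real.exp (-ε) * Real.exp τ ≤ (π * Real.exp (-τ) + 1 - π) * Real.exp τ := by
      have : (π * Real.exp (-τ) + 1 - π) * Real.exp τ = π * 1 + Real.exp τ - π * Real.exp τ := by
        rw [h2]; field_simp
      rw [this]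
      have h3 : Real.exp ε * Real.exp (τ - ε) = Real.exp τ := by
        rw [← Real.exp_add]; ring_nf
      nlinarith [hkey, h1, hπ', h3]
    exact le_of_mul_le_mul_right hgoal hexpτ
end

section
/- Suppose a probability measure inequality of the following form holds: for nonnegative reals a, b with a ≤ e^τ·b + δ (representing Pr[A(Z ∪ {x}) ∈ O] ≤ e^τ·Pr[A(Z) ∈ O] + δ for a (τ,δ)-DP mechanism A), and let π = (e^ε - 1)/(e^τ - 1) with 0 ≤ ε ≤ τ. Then the mixture π·a + (1-π)·b satisfies π·a + (1-π)·b ≤ e^ε·b + π·δ. -/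
theorem sampling_mixture_upper (ε τ δ a b : ℝ) (hε : 0 ≤ ε) (hετ : ε ≤ τ)
    (ha : 0 ≤ a) (hb : 0 ≤ b) (hdp : a ≤ Real.exp τ * b + δ)
    (π : ℝ) (hπ : π = (Real.exp ε - 1) / (Real.exp τ - 1)) :
    π * a + (1 - π) * b ≤ Real.exp ε * b + π * δ := by
  rcases eq_or_lt_of_le hε with h0 | h0
  · -- ε = 0
    rcases eq_or_lt_of_le hετ with h1 | h1
    · have hτ : τ = 0 := by linarith
      have : π = 0 := by simp [hπ, ← h0, hτ]
      simp [this, ← h0]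
    · have : π = 0 := by
        rw [hπ, ← h0]; simp
      simp [this, ← h0]
  · have hτpos : 0 < τ := lt_of_lt_of_le h0 hετ
    have hd : 0 < Real.exp τ - 1 := by
      linarith [Real.add_one_le_exp τ]
    have hπpos : 0 ≤ π := by
      rw [hπ]
      apply div_nonneg _ (le_of_lt hd)
      have := Real.one_le_exp_iff.mpr hε
      linarith
    have hkey : π * (Real.exp τ - 1) = Real.exp ε - 1 := by
      rw [hπ]; field_simp
    nlinarith [mul_le_mul_of_nonneg_left hdp hπpos]
end

section
/- Suppose nonnegative reals a, b satisfy a ≥ e^{-τ}·(b - δ) with δ ≥ 0 (representing the lower-bound direction of a (τ,δ)-DP guarantee), a ≤ 1, b ≤ 1, and let π = (e^ε - 1)/(e^τ - 1) with 0 ≤ ε ≤ τ. Then π·a + (1-π)·b ≥ e^{-ε}·(b - π·δ). -/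
theorem sampling_mixture_lower (ε τ δ a b : ℝ) (hε : 0 ≤ ε) (hετ : ε ≤ τ)
    (ha : 0 ≤ a) (hb : 0 ≤ b) (ha1 : a ≤ 1) (hb1 : b ≤ 1) (hδ : 0 ≤ δ)
    (hdp : Real.exp (-τ) * (b - δ) ≤ a)
    (π : ℝ) (hπ : π = (Real.exp ε - 1) / (Real.exp τ - 1)) :
    Real.exp (-ε) * (b - π * δ) ≤ π * a + (1 - π) * b := by
  have hτ0 : 0 ≤ τ := hε.trans hετ
  rcases eq_or_lt_of_le hτ0 with h0 | h0
  · have hε0 : ε = 0 := le_antisymm (hετ.trans h0.symm.le) hε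
    subst hε0
    have hπ0 : π = 0 := by simp [hπ, ← h0]
    subst hπ0
    simp
  · have hT1 : 1 < Real.exp τ := by
      rw [Real.one_lt_exp_iff]; exact h0
    have hE1 : 1 ≤ Real.exp ε := Real.one_le_exp hε
    have hTE : Real.exp ε ≤ Real.exp τ := Real.exp_le_exp.mpr hετ
    have hTpos : 0 < Real.exp τ - 1 := by linarith
    have hπ0 : 0 ≤ π := by
      rw [hπ]; exact div_nonneg (by linarith) hTpos.le
    have hπ1 : π ≤ 1 := by
      rw [hπ, div_le_one hTpos]; linarith
    have hinvτ : Real.exp (-τ) * Real.exp τ = 1 := by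
      rw [← Real.exp_add]; simp
    have hinvε : Real.exp (-ε) * Real.exp ε = 1 := by
      rw [← Real.exp_add]; simp
    have hτε : Real.exp (-ε) ≤ 1 := Real.exp_le_one_iff.mpr (by linarith)
    have hτε2 : Real.exp (-τ) ≤ Real.exp (-ε) := Real.exp_le_exp.mpr (by linarith)
    have hεpos : 0 < Real.exp ε := Real.exp_pos _
    have hτpos2 : 0 < Real.exp (-τ) := Real.exp_pos _
    have hεneg : 0 < Real.exp (-ε) := Real.exp_pos _
    -- key: 1 - π*(1 - exp(-τ)) ≥ exp(-ε)
    have hπdef : π * (Real.exp τ - 1) = Real.exp ε - 1 := by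
      rw [hπ, div_mul_cancel₀]; exact hTpos.ne'
    have key : Real.exp (-ε) ≤ 1 - π * (1 - Real.exp (-τ)) := by
      -- equivalent to (exp ε - 1)(exp(τ-ε) - 1) ≥ 0 after multiplying by exp τ
      have hprod : 0 ≤ (Real.exp ε - 1) * (Real.exp τ * Real.exp (-ε) - 1) := by
        have h1 : 1 ≤ Real.exp τ * Real.exp (-ε) := by
          have := Real.one_le_exp (sub_nonneg.mpr hετ)
          rwa [Real.exp_sub, div_eq_mul_inv, ← Real.exp_neg] at this
        nlinarith
      nlinarith [mul_pos (Real.exp_pos τ) hεneg, Real.exp_pos τ]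
    -- main estimate
    have step1 : π * (Real.exp (-τ) * (b - δ)) + (1 - π) * b ≤ π * a + (1 - π) * b := by
      nlinarith [mul_le_mul_of_nonneg_left hdp hπ0]
    refine le_trans ?_ step1
    have hδterm : π * Real.exp (-ε) * δ ≤ π * Real.exp (-τ) * δ + (Real.exp (-ε) - Real.exp (-τ)) * π * δ := by
      nlinarith
    nlinarith [mul_le_mul_of_nonneg_right key hb, mul_nonneg (mul_nonneg hπ0 hδ) (sub_nonneg.mpr hτε2)]
end

section
/- (Individual RDP to (ε_i, δ_i)-guarantee conversion) Fix α > 1, ρ_i ≥ 0 and 0 < δ_i < 1. Suppose a randomized mechanism M satisfies, for a dataset D containing user i's data point and D^{-i} the dataset with that point removed, Pr[M(D) ∈ S] ≤ (e^{ρ_i}·Pr[M(D^{-i}) ∈ S])^{1 - 1/α} for all measurable S. Then Pr[M(D) ∈ S] ≤ e^{ε_i}·Pr[M(D^{-i}) ∈ S] + δ_i where ε_i = ρ_i + log(1/δ_i)/(α - 1). -/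
open MeasureTheory

theorem irdp_to_pdp {Ω : Type*} [MeasurableSpace Ω]
    (μ μ' : Measure Ω) [IsProbabilityMeasure μ] [IsProbabilityMeasure μ']
    (α ρᵢ δᵢ : ℝ) (hα : 1 < α) (hρ : 0 ≤ ρᵢ) (hδ₀ : 0 < δᵢ) (hδ₁ : δᵢ < 1)
    (h : ∀ S : Set Ω, MeasurableSet S →
      (μ S).toReal ≤ (Real.exp ρᵢ * (μ' S).toReal) ^ (1 - 1 / α)) :
    ∀ S : Set Ω, MeasurableSet S →
      (μ S).toReal ≤
        Real.exp (ρᵢ + Real.log (1 / δᵢ) / (α - 1)) * (μ' S).toReal + δᵢ := by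
  intro S hS
  have hα0 : 0 < α := lt_trans one_pos hα
  have hα1 : 0 < α - 1 := by linarith
  set p : ℝ := (μ' S).toReal with hp
  set q : ℝ := (μ S).toReal with hq
  have hp0 : 0 ≤ p := ENNReal.toReal_nonneg
  set t : ℝ := Real.exp ρᵢ * p with ht
  have ht0 : 0 ≤ t := mul_nonneg (Real.exp_pos _).le hp0
  have hqt : q ≤ t ^ (1 - 1 / α) := h S hS
  set c : ℝ := δᵢ ^ (α / (α - 1)) with hc
  have hc0 : 0 < c := Real.rpow_pos_of_pos hδ₀ _
  set L : ℝ := Real.log (1 / δᵢ) / (α - 1) with hL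
  have hexp0 : 0 < 1 - 1 / α := by
    have : 1 / α < 1 := by
      rw [div_lt_one hα0]; exact hα
    linarith
  by_cases hcase : t ≤ c
  · -- q ≤ t^(1-1/α) ≤ c^(1-1/α) = δᵢ
    have h1 : t ^ (1 - 1/α) ≤ c ^ (1 - 1/α) :=
      Real.rpow_le_rpow ht0 hcase hexp0.le
    have h2 : c ^ (1 - 1/α) = δᵢ := by
      rw [hc, ← Real.rpow_mul hδ₀.le]
      have : α / (α - 1) * (1 - 1/α) = 1 := by
        field_simp
      rw [this, Real.rpow_one]
    have : q ≤ δᵢ := by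
      calc q ≤ t ^ (1 - 1/α) := hqt
        _ ≤ c ^ (1 - 1/α) := h1
        _ = δᵢ := h2.le.antisymm h2.ge
    have hpos : 0 ≤ Real.exp (ρᵢ + L) * p :=
      mul_nonneg (Real.exp_pos _).le hp0
    linarith
  · push_neg at hcase
    have ht0' : 0 < t := lt_trans hc0 hcase
    -- t^(1-1/α) = t * t^(-1/α)
    have hsplit : t ^ (1 - 1/α) = t * t ^ (-(1/α)) := by
      have h2 : t * t ^ (-(1/α)) = t ^ ((1:ℝ) + -(1/α)) := by
        rw [Real.rpow_add ht0', Real.rpow_one]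
      rw [h2]
      ring_nf
    -- t^(-1/α) ≤ c^(-1/α)
    have hmono : t ^ (-(1/α)) ≤ c ^ (-(1/α)) := by
      apply Real.rpow_le_rpow_of_nonpos hc0 hcase.le
      have : 0 < 1/α := by positivity
      linarith
    have hcval : c ^ (-(1/α)) = Real.exp L := by
      rw [hc, ← Real.rpow_mul hδ₀.le]
      have he : α / (α - 1) * -(1/α) = -(1/(α-1)) := by
        field_simp
      rw [he, Real.rpow_def_of_pos hδ₀, hL]
      congr 1
      rw [Real.log_div one_ne_zero (ne_of_gt hδ₀), Real.log_one]
      field_simp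
      ring
    have : q ≤ Real.exp (ρᵢ + L) * p := by
      calc q ≤ t ^ (1 - 1/α) := hqt
        _ = t * t ^ (-(1/α)) := hsplit
        _ ≤ t * Real.exp L := by
            apply mul_le_mul_of_nonneg_left _ ht0'.le
            rw [← hcval]; exact hmono
        _ = Real.exp (ρᵢ + L) * p := by
            rw [ht, Real.exp_add]; ring
    linarith
end
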